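/- arXiv:2305.19471 — 4 statements merged into one kernel-verified Lean document; each statement's English description precedes it below -/
import Mathlib

section
/- Let n ≥ 2 and consider the Cartan datum of type B_n: the n×n Cartan matrix C = (c_{i,j}) with c_{i,i} = 2, c_{i,i+1} = c_{i+1,i} = −1 for 1 ≤ i ≤ n−2, c_{n−1,n} = −1, c_{n,n−1} = −2, and all other entries 0, with symmetrizer D = diag(d_1,…,d_n) where d_i = 2 for i < n and d_n = 1. Then the matrix B(t) = C(t)·D^{−1} is invertible over ℚ(t), and for all 1 ≤ i ≤ j ≤ n and all integers 0 ≤ u ≤ 2n−1, the coefficient of t^u in the Laurent expansion at t = 0 of the (i,j)-entry of B(t)^{−1} equals the coefficient of t^u in the polynomial max(d_i,d_j)·Σ_{s=1}^{i} t^{n−i−1+2s} if j = n, and in max(d_i,d_j)·Σ_{s=1}^{i} (t^{j−i+2s−1} + t^{2n−j−i+2s−1}) if j < n. -/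
open Polynomial

noncomputable section

/-- The `t`-quantized Cartan matrix associated to an integer Cartan matrix `c`:
diagonal entries are `t + t⁻¹` and off-diagonal entries are the entries of `c`. -/
def tCartan {n : ℕ} (c : Matrix (Fin n) (Fin n) ℤ) :
    Matrix (Fin n) (Fin n) (RatFunc ℚ) := fun i j =>
  if i = j then RatFunc.X + RatFunc.X⁻¹ else (c i j : RatFunc ℚ)

/-- The Cartan matrix of type `B_n` (0-indexed). -/
def cartanB (n : ℕ) : Matrix (Fin n) (Fin n) ℤ := fun i j =>
  if (i : ℕ) = (j : ℕ) then 2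
  else if (j : ℕ) + 1 = (i : ℕ) ∧ (i : ℕ) = n - 1 then -2
  else if (i : ℕ) + 1 = (j : ℕ) ∨ (j : ℕ) + 1 = (i : ℕ) then -1
  else 0

/-- The symmetrizer of type `B_n` (0-indexed): `d_i = 2` for `i < n`, `d_n = 1`. -/
def dB (n : ℕ) (i : Fin n) : ℕ := if (i : ℕ) = n - 1 then 1 else 2

namespace Stmt1Aux

abbrev x : RatFunc ℚ := RatFunc.X

lemma hx : x ≠ 0 := RatFunc.X_ne_zero

lemma hx2 : (x : RatFunc ℚ)^2 - 1 ≠ 0 := by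
  have h1 : (X^2 - 1 : ℚ[X]) ≠ 0 := by
    intro h; have := congrArg (fun p => p.coeff 0) h; simp at this
  have : (algebraMap ℚ[X] (RatFunc ℚ)) (X^2-1) ≠ 0 := RatFunc.algebraMap_ne_zero h1
  simpa [map_sub, map_pow, RatFunc.algebraMap_X] using this

/-- numerator of the closed-form inverse entries (for `i ≤ j`). -/
def W (n i j : ℕ) : RatFunc ℚ :=
  (2 * ((x^i)^2 * x^2 - 1) * ((x^j)^2 * x^2 + (x^n)^2)) / (x^j * x^i * x)

def V (n i j : ℕ) : RatFunc ℚ := W n (min i j) (max i j) / (x ^ 2 - 1)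

lemma xinv : (x + x⁻¹) = (x^2+1)/x := by
  rw [eq_div_iff hx, add_mul, inv_mul_cancel₀ hx]; ring

lemma key3 {N1 D1 N2 D2 N3 D3 R y : RatFunc ℚ} (h1 : D1 ≠ 0) (h2 : D2 ≠ 0) (h3 : D3 ≠ 0)
    (hy : y ≠ 0)
    (h : (x^2+1)*N1*(D2*D3) - x*N2*(D1*D3) - x*N3*(D1*D2) = x*R*y*(D1*(D2*D3))) :
    (x+x⁻¹)*(N1/D1/y) - N2/D2/y - N3/D3/y = R := by
  have h0 : x ≠ 0 := hx
  have hA : x*(D1*y) ≠ 0 := by simp [h0, h1, hy]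
  have hB : D2*y ≠ 0 := mul_ne_zero h2 hy
  have hC : D3*y ≠ 0 := mul_ne_zero h3 hy
  rw [div_div, div_div, div_div, xinv, div_mul_div_comm,
    div_sub_div _ _ hA hB, div_sub_div _ _ (mul_ne_zero hA hB) hC,
    div_eq_iff (mul_ne_zero (mul_ne_zero hA hB) hC)]
  linear_combination y^2 * h

lemma key2 {N1 D1 N2 D2 R y : RatFunc ℚ} (h1 : D1 ≠ 0) (h2 : D2 ≠ 0)
    (hy : y ≠ 0)
    (h : (x^2+1)*N1*D2 - x*N2*D1 = x*R*y*(D1*D2)) :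
    (x+x⁻¹)*(N1/D1/y) - N2/D2/y = R := by
  have h0 : x ≠ 0 := hx
  have hA : x*(D1*y) ≠ 0 := by simp [h0, h1, hy]
  have hB : D2*y ≠ 0 := mul_ne_zero h2 hy
  rw [div_div, div_div, xinv, div_mul_div_comm,
    div_sub_div _ _ hA hB, div_eq_iff (mul_ne_zero hA hB)]
  linear_combination y * h

lemma key2' {N1 D1 N2 D2 R y : RatFunc ℚ} (h1 : D1 ≠ 0) (h2 : D2 ≠ 0)
    (hy : y ≠ 0)
    (h : (x^2+1)*N1*D2 - 2*(x*N2*D1) = x*R*y*(D1*D2)) :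
    (x+x⁻¹)*(N1/D1/y) - 2*(N2/D2/y) = R := by
  have h0 : x ≠ 0 := hx
  have hA : x*(D1*y) ≠ 0 := by simp [h0, h1, hy]
  have hB : D2*y ≠ 0 := mul_ne_zero h2 hy
  have e : 2*(N2/(D2*y)) = (2*N2)/(D2*y) := by ring
  rw [div_div, div_div, xinv, div_mul_div_comm, e,
    div_sub_div _ _ hA hB, div_eq_iff (mul_ne_zero hA hB)]
  linear_combination y * h

lemma pxne (m : ℕ) : (x:RatFunc ℚ)^m ≠ 0 := pow_ne_zero _ hx

lemma dne (i j : ℕ) : (x:RatFunc ℚ)^j * x^i * x ≠ 0 := by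
  simp [pxne, hx]

lemma row0 (n j : ℕ) :
    (x + x⁻¹) * V n 0 j - V n 1 j = if 0 = j then 2 * (1 + (x^n)^2) else 0 := by
  rcases Nat.eq_zero_or_pos j with hj | hj
  · subst hj
    rw [if_pos rfl]
    have e1 : min 1 0 = 0 := rfl
    have e2 : max 1 0 = 1 := rfl
    simp only [V, W, Nat.min_self, Nat.max_self, e1, e2]
    apply key2 (dne 0 0) (dne 0 1) hx2
    simp only [pow_succ, pow_zero]
    generalize (x:RatFunc ℚ)^n = c
    ring
  · rw [if_neg (by omega)]
    have e1 : min 1 j = 1 := by omega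
    have e2 : max 1 j = j := by omega
    simp only [V, W, e1, e2, min_eq_left (Nat.zero_le j), max_eq_right (Nat.zero_le j)]
    apply key2 (dne 0 j) (dne 1 j) hx2
    simp only [pow_succ, pow_zero]
    generalize (x:RatFunc ℚ)^j = a
    generalize (x:RatFunc ℚ)^n = c
    ring

lemma rowMid (n k j : ℕ) :
    (x + x⁻¹) * V n (k+1) j - V n k j - V n (k+2) j
      = if k+1 = j then 2 * (1 + (x^n)^2) else 0 := by
  rcases lt_trichotomy j (k+1) with hj | hj | hj
  · rw [if_neg (by omega)]
    have e1 : min (k+1) j = j := by omega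
    have e2 : max (k+1) j = k+1 := by omega
    have e3 : min k j = j := by omega
    have e4 : max k j = k := by omega
    have e5 : min (k+2) j = j := by omega
    have e6 : max (k+2) j = k+2 := by omega
    simp only [V, W, e1, e2, e3, e4, e5, e6]
    apply key3 (dne j (k+1)) (dne j k) (dne j (k+2)) hx2
    simp only [pow_succ]
    generalize (x:RatFunc ℚ)^j = a
    generalize (x:RatFunc ℚ)^k = b
    generalize (x:RatFunc ℚ)^n = c
    ring
  · subst hj
    rw [if_pos rfl]
    have e1 : min k (k+1) = k := by omega
    have e2 : max k (k+1) = k+1 := by omega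
    have e5 : min (k+2) (k+1) = k+1 := by omega
    have e6 : max (k+2) (k+1) = k+2 := by omega
    simp only [V, W, e1, e2, e5, e6, min_self, max_self]
    apply key3 (dne (k+1) (k+1)) (dne k (k+1)) (dne (k+1) (k+2)) hx2
    simp only [pow_succ]
    generalize (x:RatFunc ℚ)^k = b
    generalize (x:RatFunc ℚ)^n = c
    ring
  · rw [if_neg (by omega)]
    have e1 : min (k+1) j = k+1 := by omega
    have e2 : max (k+1) j = j := by omega
    have e3 : min k j = k := by omega
    have e4 : max k j = j := by omega
    have e5 : min (k+2) j = k+2 := by omega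
    have e6 : max (k+2) j = j := by omega
    simp only [V, W, e1, e2, e3, e4, e5, e6]
    apply key3 (dne (k+1) j) (dne k j) (dne (k+2) j) hx2
    simp only [pow_succ]
    generalize (x:RatFunc ℚ)^j = a
    generalize (x:RatFunc ℚ)^k = b
    generalize (x:RatFunc ℚ)^n = c
    ring

lemma rowLast (m j : ℕ) (hj : j ≤ m+1) :
    (x + x⁻¹) * V (m+2) (m+1) j - 2 * (V (m+2) m j)
      = if m+1 = j then 4 * (1 + (x^(m+2))^2) else 0 := by
  rcases Nat.lt_or_ge j (m+1) with hj' | hj'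
  · rw [if_neg (by omega)]
    have e1 : min (m+1) j = j := by omega
    have e2 : max (m+1) j = m+1 := by omega
    have e3 : min m j = j := by omega
    have e4 : max m j = m := by omega
    simp only [V, W, e1, e2, e3, e4]
    apply key2' (dne j (m+1)) (dne j m) hx2
    simp only [pow_succ]
    generalize (x:RatFunc ℚ)^j = a
    generalize (x:RatFunc ℚ)^m = b
    ring
  · have hj2 : j = m+1 := by omega
    subst hj2
    rw [if_pos rfl]
    have e3 : min m (m+1) = m := by omega
    have e4 : max m (m+1) = m+1 := by omega
    simp only [V, W, e3, e4, min_self, max_self]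
    apply key2' (dne (m+1) (m+1)) (dne m (m+1)) hx2
    simp only [pow_succ]
    generalize (x:RatFunc ℚ)^m = b
    ring

/-- The ℕ-indexed version of the quantized Cartan matrix of type B. -/
def tCN (n i k : ℕ) : RatFunc ℚ :=
  if i = k then x + x⁻¹
  else if k+1 = i ∧ i = n-1 then -2
  else if (i+1 = k ∨ k+1 = i) then -1
  else 0

lemma tC_eq (n : ℕ) (i k : Fin n) :
    tCartan (cartanB n) i k = tCN n (i:ℕ) (k:ℕ) := by
  rcases eq_or_ne i k with h | h
  · subst h; simp [tCartan, tCN]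
  · have h' : (i:ℕ) ≠ (k:ℕ) := by simpa [Fin.ext_iff] using h
    simp only [tCartan, if_neg h, tCN, if_neg h', cartanB]
    split_ifs <;> norm_num

lemma sumrow (n : ℕ) (hn : 2 ≤ n) (i j : Fin n) :
    ∑ k : Fin n, tCartan (cartanB n) i k * V n (k:ℕ) (j:ℕ) =
      if i = j then (if (j:ℕ) = n-1 then 4 else 2) * (1 + ((x:RatFunc ℚ)^n)^2) else 0 := by
  have hsum : ∑ k : Fin n, tCartan (cartanB n) i k * V n (k:ℕ) (j:ℕ)
      = ∑ k ∈ Finset.range n, tCN n (i:ℕ) k * V n k (j:ℕ) := by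
    rw [← Fin.sum_univ_eq_sum_range (fun k => tCN n (i:ℕ) k * V n k (j:ℕ)) n]
    exact Finset.sum_congr rfl (fun k _ => by rw [tC_eq])
  rw [hsum]
  have hjlt : (j:ℕ) < n := j.isLt
  have hilt : (i:ℕ) < n := i.isLt
  rcases Nat.eq_zero_or_pos (i:ℕ) with hi0 | hipos
  · -- first row
    have hsub : ({0, 1} : Finset ℕ) ⊆ Finset.range n := by
      intro t ht
      simp only [Finset.mem_insert, Finset.mem_singleton] at ht
      rcases ht with h|h <;> subst h <;> simp [Finset.mem_range] <;> omega
    rw [← Finset.sum_subset hsub (by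
      intro t _ hnot
      simp only [Finset.mem_insert, Finset.mem_singleton] at hnot
      push_neg at hnot
      have : tCN n (i:ℕ) t = 0 := by
        simp only [tCN, hi0]
        rw [if_neg (by omega), if_neg (by omega), if_neg (by omega)]
      rw [this, zero_mul])]
    rw [Finset.sum_pair (by omega : (0:ℕ) ≠ 1)]
    have t0 : tCN n (i:ℕ) 0 = x + x⁻¹ := by
      simp only [tCN]
      rw [if_pos (show (i:ℕ) = 0 by omega)]
    have t1 : tCN n (i:ℕ) 1 = -1 := by
      simp only [tCN]
      rw [if_neg (show ¬(i:ℕ) = 1 by omega),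
        if_neg (show ¬(1+1 = (i:ℕ) ∧ (i:ℕ) = n-1) by omega),
        if_pos (show ((i:ℕ)+1 = 1 ∨ 1+1 = (i:ℕ)) by omega)]
    rw [t0, t1]
    have hrw : (x + x⁻¹) * V n 0 (j:ℕ) + (-1) * V n 1 (j:ℕ)
        = (x + x⁻¹) * V n 0 (j:ℕ) - V n 1 (j:ℕ) := by ring
    rw [hrw, row0 n (j:ℕ)]
    by_cases hj : (j:ℕ) = 0
    · have hij : i = j := Fin.ext (by omega)
      rw [if_pos (show (0:ℕ) = (j:ℕ) by omega), if_pos hij,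
        if_neg (show ¬(j:ℕ) = n-1 by omega)]
    · have hij : i ≠ j := by simp only [ne_eq, Fin.ext_iff]; omega
      rw [if_neg (show ¬(0:ℕ) = (j:ℕ) by omega), if_neg hij]
  · rcases Nat.lt_or_ge (i:ℕ) (n-1) with himid | hilast
    · -- middle rows
      obtain ⟨k, hk⟩ : ∃ k, (i:ℕ) = k+1 := ⟨(i:ℕ)-1, by omega⟩
      have hsub : ({k, k+1, k+2} : Finset ℕ) ⊆ Finset.range n := by
        intro t ht
        simp only [Finset.mem_insert, Finset.mem_singleton] at ht
        rcases ht with h|h|h <;> subst h <;> simp [Finset.mem_range] <;> omega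
      rw [← Finset.sum_subset hsub (by
        intro t _ hnot
        simp only [Finset.mem_insert, Finset.mem_singleton] at hnot
        push_neg at hnot
        have : tCN n (i:ℕ) t = 0 := by
          simp only [tCN, hk]
          rw [if_neg (by omega), if_neg (by omega), if_neg (by omega)]
        rw [this, zero_mul])]
      rw [Finset.sum_insert (by simp only [Finset.mem_insert, Finset.mem_singleton]; omega),
        Finset.sum_pair (by omega : k+1 ≠ k+2)]
      have t0 : tCN n (i:ℕ) k = -1 := by
        simp only [tCN]
        rw [if_neg (show ¬(i:ℕ) = k by omega),
          if_neg (show ¬(k+1 = (i:ℕ) ∧ (i:ℕ) = n-1) by omega),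
          if_pos (show ((i:ℕ)+1 = k ∨ k+1 = (i:ℕ)) by omega)]
      have t1 : tCN n (i:ℕ) (k+1) = x + x⁻¹ := by
        simp only [tCN]
        rw [if_pos (show (i:ℕ) = k+1 by omega)]
      have t2 : tCN n (i:ℕ) (k+2) = -1 := by
        simp only [tCN]
        rw [if_neg (show ¬(i:ℕ) = k+2 by omega),
          if_neg (show ¬(k+2+1 = (i:ℕ) ∧ (i:ℕ) = n-1) by omega),
          if_pos (show ((i:ℕ)+1 = k+2 ∨ k+2+1 = (i:ℕ)) by omega)]
      rw [t0, t1, t2]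
      have hrw : (-1) * V n k (j:ℕ) + ((x + x⁻¹) * V n (k+1) (j:ℕ) + (-1) * V n (k+2) (j:ℕ))
          = (x + x⁻¹) * V n (k+1) (j:ℕ) - V n k (j:ℕ) - V n (k+2) (j:ℕ) := by ring
      rw [hrw, rowMid n k (j:ℕ)]
      by_cases hj : k+1 = (j:ℕ)
      · have hij : i = j := Fin.ext (by omega)
        rw [if_pos (show k+1 = (j:ℕ) by omega), if_pos hij,
          if_neg (show ¬(j:ℕ) = n-1 by omega)]
      · have hij : i ≠ j := by simp only [ne_eq, Fin.ext_iff]; omega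
        rw [if_neg (show ¬k+1 = (j:ℕ) by omega), if_neg hij]
    · -- last row
      obtain ⟨m, hm⟩ : ∃ m, n = m+2 := ⟨n-2, by omega⟩
      have hi : (i:ℕ) = m+1 := by omega
      subst hm
      have hsub : ({m, m+1} : Finset ℕ) ⊆ Finset.range (m+2) := by
        intro t ht
        simp only [Finset.mem_insert, Finset.mem_singleton] at ht
        rcases ht with h|h <;> subst h <;> simp [Finset.mem_range]
      rw [← Finset.sum_subset hsub (by
        intro t ht hnot
        simp only [Finset.mem_insert, Finset.mem_singleton] at hnot
        simp only [Finset.mem_range] at ht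
        push_neg at hnot
        have : tCN (m+2) (i:ℕ) t = 0 := by
          simp only [tCN, hi]
          rw [if_neg (by omega), if_neg (by omega), if_neg (by omega)]
        rw [this, zero_mul])]
      rw [Finset.sum_pair (by omega : m ≠ m+1)]
      have t0 : tCN (m+2) (i:ℕ) m = -2 := by
        simp only [tCN]
        rw [if_neg (show ¬(i:ℕ) = m by omega),
          if_pos (show (m+1 = (i:ℕ) ∧ (i:ℕ) = m+2-1) by omega)]
      have t1 : tCN (m+2) (i:ℕ) (m+1) = x + x⁻¹ := by
        simp only [tCN]
        rw [if_pos (show (i:ℕ) = m+1 by omega)]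
      rw [t0, t1]
      have hrw : (-2) * V (m+2) m (j:ℕ) + (x + x⁻¹) * V (m+2) (m+1) (j:ℕ)
          = (x + x⁻¹) * V (m+2) (m+1) (j:ℕ) - 2 * (V (m+2) m (j:ℕ)) := by ring
      rw [hrw, rowLast m (j:ℕ) (by omega)]
      by_cases hj : m+1 = (j:ℕ)
      · have hij : i = j := Fin.ext (by omega)
        rw [if_pos (show m+1 = (j:ℕ) by omega), if_pos hij,
          if_pos (show (j:ℕ) = m+2-1 by omega)]
      · have hij : i ≠ j := by simp only [ne_eq, Fin.ext_iff]; omega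
        rw [if_neg (show ¬m+1 = (j:ℕ) by omega), if_neg hij]

/-- The candidate inverse matrix. -/
def Mm (n : ℕ) : Matrix (Fin n) (Fin n) (RatFunc ℚ) :=
  fun i j => (dB n i : RatFunc ℚ) * (dB n j) / 4 * V n (i:ℕ) (j:ℕ) / (1 + (x^n)^2)

lemma hden (n : ℕ) (hn : 1 ≤ n) : (1 : RatFunc ℚ) + ((x:RatFunc ℚ)^n)^2 ≠ 0 := by
  have h1 : (1 + (X^n)^2 : ℚ[X]) ≠ 0 := by
    intro h
    have h0 := congrArg (fun p => p.coeff 0) h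
    simp [coeff_one, ← pow_mul, coeff_X_pow, (show ¬(0:ℕ) = n*2 by omega)] at h0
  have : (algebraMap ℚ[X] (RatFunc ℚ)) (1 + (X^n)^2) ≠ 0 := RatFunc.algebraMap_ne_zero h1
  simpa [map_add, map_one, map_pow, RatFunc.algebraMap_X] using this

lemma dB_ne (n : ℕ) (k : Fin n) : (dB n k : RatFunc ℚ) ≠ 0 := by
  have h1 : ((dB n k : ℕ) : RatFunc ℚ)
      = algebraMap ℚ[X] (RatFunc ℚ) ((dB n k : ℕ) : ℚ[X]) := (map_natCast _ _).symm
  rw [h1]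
  apply RatFunc.algebraMap_ne_zero
  have : dB n k ≠ 0 := by simp only [dB]; split_ifs <;> omega
  exact_mod_cast Nat.cast_ne_zero.mpr this

lemma four_ne : (4 : RatFunc ℚ) ≠ 0 := by
  have h1 : (4 : RatFunc ℚ) = algebraMap ℚ[X] (RatFunc ℚ) 4 := (map_ofNat _ 4).symm
  rw [h1]
  apply RatFunc.algebraMap_ne_zero
  norm_num

lemma cancel_aux (t d c : RatFunc ℚ) (hd : d ≠ 0) : t * d⁻¹ * (d * c) = t * c := by
  rw [mul_assoc, inv_mul_cancel_left₀ hd]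

lemma unit_aux (a b D : RatFunc ℚ) (hD : D ≠ 0) (hab : a * b = 4) :
    a/4/D*(b*D) = 1 := by
  have h : a/4/D*(b*D) = (a*b)/4 * (D/D) := by ring
  rw [h, div_self hD, hab, mul_one, div_self four_ne]

lemma BM (n : ℕ) (hn : 2 ≤ n) :
    (tCartan (cartanB n) * Matrix.diagonal (fun i => ((dB n i : RatFunc ℚ))⁻¹)) * Mm n = 1 := by
  ext i j
  rw [Matrix.mul_apply]
  have e : ∀ k : Fin n,
      (tCartan (cartanB n) * Matrix.diagonal (fun i => ((dB n i : RatFunc ℚ))⁻¹)) i k * Mm n k j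
      = (dB n j : RatFunc ℚ)/4/(1+(x^n)^2) * (tCartan (cartanB n) i k * V n (k:ℕ) (j:ℕ)) := by
    intro k
    rw [Matrix.mul_diagonal]
    simp only [Mm]
    have hdk : (dB n k : RatFunc ℚ) ≠ 0 := dB_ne n k
    calc tCartan (cartanB n) i k * ((dB n k : RatFunc ℚ))⁻¹ *
          ((dB n k : RatFunc ℚ) * (dB n j) / 4 * V n (k:ℕ) (j:ℕ) / (1 + (x^n)^2))
        = tCartan (cartanB n) i k * ((dB n k : RatFunc ℚ))⁻¹ *
          ((dB n k : RatFunc ℚ) * ((dB n j : RatFunc ℚ)/4/(1+(x^n)^2) * V n (k:ℕ) (j:ℕ))) := by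
          ring
      _ = tCartan (cartanB n) i k *
          ((dB n j : RatFunc ℚ)/4/(1+(x^n)^2) * V n (k:ℕ) (j:ℕ)) := cancel_aux _ _ _ hdk
      _ = (dB n j : RatFunc ℚ)/4/(1+(x^n)^2) * (tCartan (cartanB n) i k * V n (k:ℕ) (j:ℕ)) := by
          ring
  rw [Finset.sum_congr rfl (fun k _ => e k), ← Finset.mul_sum, sumrow n hn i j]
  have hd := hden n (by omega)
  rcases eq_or_ne i j with h | h
  · subst h
    rw [if_pos rfl, Matrix.one_apply_eq]
    by_cases hj : (i:ℕ) = n-1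
    · rw [if_pos hj]
      have hdB : dB n i = 1 := by simp [dB, hj]
      rw [hdB]
      push_cast
      exact unit_aux _ _ _ hd (by norm_num)
    · rw [if_neg hj]
      have hdB : dB n i = 2 := by simp [dB, hj]
      rw [hdB]
      push_cast
      exact unit_aux _ _ _ hd (by norm_num)
  · rw [if_neg h, mul_zero, Matrix.one_apply_ne h]

lemma coeff_lem (n : ℕ) (hn : 1 ≤ n) (p : ℚ[X]) (u : ℕ) (hu : u < 2*n) :
    (((algebraMap ℚ[X] (RatFunc ℚ) p) / (algebraMap ℚ[X] (RatFunc ℚ) (1+X^(2*n))) :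
      RatFunc ℚ) : LaurentSeries ℚ).coeff (u:ℤ) = p.coeff u := by
  classical
  set q : PowerSeries ℚ := (1 : PowerSeries ℚ) + PowerSeries.X^(2*n) with hq
  have hq0 : PowerSeries.constantCoeff q ≠ 0 := by
    simp [hq, zero_pow (by omega : 2*n ≠ 0)]
  set g : PowerSeries ℚ := (p : PowerSeries ℚ) * q⁻¹ with hg
  have hgq : g * q = (p : PowerSeries ℚ) := by
    rw [hg, mul_assoc, PowerSeries.inv_mul_cancel _ hq0, mul_one]
  have hqpoly : ((1 + X^(2*n) : ℚ[X]) : PowerSeries ℚ) = q := by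
    push_cast
    rfl
  have hqL : ((q : PowerSeries ℚ) : LaurentSeries ℚ) ≠ 0 := by
    intro h
    have : q = 0 := by
      apply HahnSeries.ofPowerSeries_injective (Γ := ℤ)
      simpa using h
    rw [this] at hq0; simp at hq0
  have step1 : (((algebraMap ℚ[X] (RatFunc ℚ) p) / (algebraMap ℚ[X] (RatFunc ℚ) (1+X^(2*n))) :
      RatFunc ℚ) : LaurentSeries ℚ) = ((g : PowerSeries ℚ) : LaurentSeries ℚ) := by
    rw [map_div₀]
    rw [show ((algebraMap ℚ[X] (RatFunc ℚ) p : RatFunc ℚ) : LaurentSeries ℚ)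
        = ((p : PowerSeries ℚ) : LaurentSeries ℚ) from (RatFunc.coe_coe p).symm]
    rw [show ((algebraMap ℚ[X] (RatFunc ℚ) (1+X^(2*n)) : RatFunc ℚ) : LaurentSeries ℚ)
        = ((q : PowerSeries ℚ) : LaurentSeries ℚ) from hqpoly ▸ (RatFunc.coe_coe _).symm]
    rw [div_eq_iff hqL, ← PowerSeries.coe_mul, hgq]
  rw [step1, PowerSeries.coeff_coe, if_neg (by omega)]
  have : PowerSeries.coeff u g = p.coeff u := by
    have h2 : PowerSeries.coeff u ((p : PowerSeries ℚ)) = p.coeff u := by simp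
    rw [← hgq, hq, mul_add, mul_one, map_add, PowerSeries.coeff_mul_X_pow',
      if_neg (by omega)] at h2
    simpa using h2
  simpa using this

/-- The statement's polynomial. -/
def Pp (n : ℕ) (i j : Fin n) : ℚ[X] :=
  (max (dB n i) (dB n j) : ℚ) •
    (if (j : ℕ) = n - 1 then
        ∑ s ∈ Finset.range ((i : ℕ) + 1),
          (X : ℚ[X]) ^ (n - ((i : ℕ) + 1) + 2 * s + 1)
      else
        ∑ s ∈ Finset.range ((i : ℕ) + 1),
          ((X : ℚ[X]) ^ (((j : ℕ) + 1) - ((i : ℕ) + 1) + 2 * s + 1) +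
           (X : ℚ[X]) ^ (2 * n - ((j : ℕ) + 1) - ((i : ℕ) + 1) + 2 * s + 1)))

lemma eqdiv {y a N D c E F : RatFunc ℚ} (hD : D ≠ 0) (hy : y ≠ 0)
    (h : a * N * y = c * E * F * D * y) : a * (N / D / y) = c * (E / y * F) := by
  rw [div_div, mul_div_assoc', show c * (E/y*F) = (c*E*F)/y from by ring,
    div_eq_div_iff (mul_ne_zero hD hy) hy]
  linear_combination h

lemma Mm_poly (n : ℕ) (hn : 2 ≤ n) (i j : Fin n) (hij : (i:ℕ) ≤ (j:ℕ)) :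
    Mm n i j = algebraMap ℚ[X] (RatFunc ℚ) (Pp n i j)
      / algebraMap ℚ[X] (RatFunc ℚ) (1 + X^(2*n)) := by
  have hmap2 : algebraMap ℚ[X] (RatFunc ℚ) (1 + X^(2*n)) = 1 + ((x:RatFunc ℚ)^n)^2 := by
    rw [map_add, map_one, map_pow, RatFunc.algebraMap_X, ← pow_mul']
  rw [hmap2]
  show (dB n i : RatFunc ℚ) * (dB n j) / 4 * V n (i:ℕ) (j:ℕ) / (1 + (x^n)^2) = _
  suffices h : (dB n i : RatFunc ℚ) * (dB n j) / 4 * V n (i:ℕ) (j:ℕ)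
      = algebraMap ℚ[X] (RatFunc ℚ) (Pp n i j) by rw [h]
  have hjlt : (j:ℕ) < n := j.isLt
  simp only [V, min_eq_left hij, max_eq_right hij, W]
  by_cases hj : (j:ℕ) = n-1
  · -- last column
    simp only [Pp, if_pos hj, Polynomial.smul_eq_C_mul, map_mul, map_sum, map_pow,
      RatFunc.algebraMap_C, RatFunc.algebraMap_X]
    by_cases hi : (i:ℕ) = n-1
    · -- corner entry
      have hdi : dB n i = 1 := by simp [dB, hi]
      have hdj : dB n j = 1 := by simp [dB, hj]
      rw [hdi, hdj]
      have he : ∀ s : ℕ, n - ((i:ℕ)+1) + 2*s + 1 = 2*s+1 := by intro s; omega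
      simp only [he]
      have sumEq : ∑ s ∈ Finset.range ((i:ℕ)+1), (x:RatFunc ℚ)^(2*s+1)
          = (∑ s ∈ Finset.range ((i:ℕ)+1), ((x:RatFunc ℚ)^2)^s) * (1 * x) := by
        rw [Finset.sum_mul]
        refine Finset.sum_congr rfl (fun s _ => ?_)
        rw [← pow_mul, one_mul, ← pow_succ]
      rw [sumEq]
      have hS : (∑ s ∈ Finset.range ((i:ℕ)+1), ((x:RatFunc ℚ)^2)^s)
          = (((x:RatFunc ℚ)^2)^((i:ℕ)+1) - 1) / (x^2 - 1) := by
        rw [eq_div_iff hx2, geom_sum_mul]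
      rw [hS]
      apply eqdiv (dne (i:ℕ) (j:ℕ)) hx2
      have hxn : (x:RatFunc ℚ)^n = x^(i:ℕ) * x := by
        rw [← pow_succ]; congr 1; omega
      have hxj : (x:RatFunc ℚ)^(j:ℕ) = x^(i:ℕ) := by congr 1; omega
      rw [hxn, hxj]
      rw [show RatFunc.C (max ((1:ℕ):ℚ) ((1:ℕ):ℚ)) = 1 by norm_num]
      rw [show ((x:RatFunc ℚ)^2)^((i:ℕ)+1) = (x^(i:ℕ))^2 * x^2 from by
        rw [← pow_mul, ← pow_mul, ← pow_add]; congr 1; ring]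
      simp only [pow_succ]
      generalize (x:RatFunc ℚ)^(i:ℕ) = A
      rw [div_mul_eq_mul_div, div_mul_eq_mul_div, div_eq_iff four_ne]
      push_cast
      ring
    · -- i < j = n-1
      have hdi : dB n i = 2 := by simp [dB, hi]
      have hdj : dB n j = 1 := by simp [dB, hj]
      rw [hdi, hdj]
      obtain ⟨e, he⟩ : ∃ e, n = (i:ℕ)+1+e := ⟨n-((i:ℕ)+1), by omega⟩
      have he' : ∀ s : ℕ, n - ((i:ℕ)+1) + 2*s + 1 = e+2*s+1 := by intro s; omega
      simp only [he']
      have sumEq : ∑ s ∈ Finset.range ((i:ℕ)+1), (x:RatFunc ℚ)^(e+2*s+1)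
          = (∑ s ∈ Finset.range ((i:ℕ)+1), ((x:RatFunc ℚ)^2)^s) * (x^e * x) := by
        rw [Finset.sum_mul]
        refine Finset.sum_congr rfl (fun s _ => ?_)
        rw [← pow_mul, ← pow_succ, ← pow_add]
        congr 1; omega
      rw [sumEq]
      have hS : (∑ s ∈ Finset.range ((i:ℕ)+1), ((x:RatFunc ℚ)^2)^s)
          = (((x:RatFunc ℚ)^2)^((i:ℕ)+1) - 1) / (x^2 - 1) := by
        rw [eq_div_iff hx2, geom_sum_mul]
      rw [hS]
      apply eqdiv (dne (i:ℕ) (j:ℕ)) hx2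
      have hxn : (x:RatFunc ℚ)^n = x^(i:ℕ) * x^e * x := by
        rw [← pow_add, ← pow_succ]; congr 1; omega
      have hxj : (x:RatFunc ℚ)^(j:ℕ) = x^(i:ℕ) * x^e := by
        rw [← pow_add]; congr 1; omega
      rw [hxn, hxj]
      rw [show RatFunc.C (max ((2:ℕ):ℚ) ((1:ℕ):ℚ)) = 2 by norm_num]
      rw [show ((x:RatFunc ℚ)^2)^((i:ℕ)+1) = (x^(i:ℕ))^2 * x^2 from by
        rw [← pow_mul, ← pow_mul, ← pow_add]; congr 1; ring]
      simp only [pow_succ]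
      generalize (x:RatFunc ℚ)^(i:ℕ) = A
      generalize (x:RatFunc ℚ)^e = Ee
      rw [div_mul_eq_mul_div, div_mul_eq_mul_div, div_eq_iff four_ne]
      push_cast
      ring
  · -- j < n-1
    have hdi : dB n i = 2 := by
      have : (i:ℕ) ≠ n-1 := by omega
      simp [dB, this]
    have hdj : dB n j = 2 := by simp [dB, hj]
    simp only [Pp, if_neg hj, Polynomial.smul_eq_C_mul, map_mul, map_sum, map_add, map_pow,
      RatFunc.algebraMap_C, RatFunc.algebraMap_X]
    rw [hdi, hdj]
    obtain ⟨a, ha⟩ : ∃ a, (j:ℕ) = (i:ℕ)+a := ⟨(j:ℕ)-(i:ℕ), by omega⟩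
    obtain ⟨b, hb⟩ : ∃ b, 2*n = ((j:ℕ)+1)+(((i:ℕ)+1)+b) := ⟨2*n-(j:ℕ)-(i:ℕ)-2, by omega⟩
    have he1 : ∀ s : ℕ, ((j:ℕ)+1) - ((i:ℕ)+1) + 2*s + 1 = a+2*s+1 := by intro s; omega
    have he2 : ∀ s : ℕ, 2*n - ((j:ℕ)+1) - ((i:ℕ)+1) + 2*s + 1 = b+2*s+1 := by intro s; omega
    simp only [he1, he2]
    have sumEq : ∑ s ∈ Finset.range ((i:ℕ)+1),
          ((x:RatFunc ℚ)^(a+2*s+1) + (x:RatFunc ℚ)^(b+2*s+1))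
        = (∑ s ∈ Finset.range ((i:ℕ)+1), ((x:RatFunc ℚ)^2)^s) * (x^a * x + x^b * x) := by
      rw [Finset.sum_mul]
      refine Finset.sum_congr rfl (fun s _ => ?_)
      rw [mul_add]
      congr 1 <;> rw [← pow_mul, ← pow_succ, ← pow_add] <;> congr 1 <;> omega
    rw [sumEq]
    have hS : (∑ s ∈ Finset.range ((i:ℕ)+1), ((x:RatFunc ℚ)^2)^s)
        = (((x:RatFunc ℚ)^2)^((i:ℕ)+1) - 1) / (x^2 - 1) := by
      rw [eq_div_iff hx2, geom_sum_mul]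
    rw [hS]
    apply eqdiv (dne (i:ℕ) (j:ℕ)) hx2
    have hxn : ((x:RatFunc ℚ)^n)^2 = x^(i:ℕ) * (x^(i:ℕ) * (x^a * (x^b * x^2))) := by
      rw [← pow_mul, show n*2 = (i:ℕ)+((i:ℕ)+(a+(b+2))) from by omega,
        pow_add, pow_add, pow_add, pow_add]
    have hxj : (x:RatFunc ℚ)^(j:ℕ) = x^(i:ℕ) * x^a := by
      rw [ha, pow_add]
    rw [hxn, hxj]
    rw [show RatFunc.C (max ((2:ℕ):ℚ) ((2:ℕ):ℚ)) = 2 by norm_num]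
    rw [show ((x:RatFunc ℚ)^2)^((i:ℕ)+1) = (x^(i:ℕ))^2 * x^2 from by
      rw [← pow_mul, ← pow_mul, ← pow_add]; congr 1; ring]
    simp only [pow_succ]
    generalize (x:RatFunc ℚ)^(i:ℕ) = A
    generalize (x:RatFunc ℚ)^a = Aa
    generalize (x:RatFunc ℚ)^b = Bb
    rw [div_mul_eq_mul_div, div_mul_eq_mul_div, div_eq_iff four_ne]
    push_cast
    ring

end Stmt1Aux

theorem stmt1 (n : ℕ) (hn : 2 ≤ n)
    (B : Matrix (Fin n) (Fin n) (RatFunc ℚ))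
    (hB : B = tCartan (cartanB n) *
      Matrix.diagonal (fun i => ((dB n i : RatFunc ℚ))⁻¹)) :
    IsUnit B.det ∧
    ∀ i j : Fin n, i ≤ j → ∀ u : ℕ, u ≤ 2 * n - 1 →
      ((B⁻¹ i j : RatFunc ℚ) : LaurentSeries ℚ).coeff (u : ℤ) =
      ((max (dB n i) (dB n j) : ℚ) •
        (if (j : ℕ) = n - 1 then
            ∑ s ∈ Finset.range ((i : ℕ) + 1),
              (X : ℚ[X]) ^ (n - ((i : ℕ) + 1) + 2 * s + 1)
          else
            ∑ s ∈ Finset.range ((i : ℕ) + 1),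
              ((X : ℚ[X]) ^ (((j : ℕ) + 1) - ((i : ℕ) + 1) + 2 * s + 1) +
               (X : ℚ[X]) ^ (2 * n - ((j : ℕ) + 1) - ((i : ℕ) + 1) + 2 * s + 1)))).coeff u := by
  subst hB
  have hBM := Stmt1Aux.BM n hn
  constructor
  · exact Matrix.isUnit_det_of_right_inverse hBM
  · intro i j hij u hu
    have hinv := Matrix.inv_eq_right_inv hBM
    rw [hinv, Stmt1Aux.Mm_poly n hn i j hij,
      Stmt1Aux.coeff_lem n (by omega) _ u (by omega)]
    rfl
end
end

section
/- Let i ≠ j in I with c_{i,j} = 0, and let T_i and T_j be braid operators at i and at j respectively. Then T_i ∘ T_j = T_j ∘ T_i as automorphisms of Â_q(n). -/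
noncomputable section

open scoped BigOperators

/-- The base field `F = ℚ(v)`. -/
abbrev F : Type := RatFunc ℚ

/-- The variable `v` (a square root of `q`). -/
def v : F := RatFunc.X

/-- The quantum integer `[k]_a = (a^k - a^{-k})/(a - a^{-1})`. -/
def qnum (a : F) (k : ℕ) : F := (a ^ k - a⁻¹ ^ k) / (a - a⁻¹)

/-- The quantum factorial `[k]_a!`. -/
def qfac (a : F) (k : ℕ) : F := ∏ s ∈ Finset.range k, qnum a (s + 1)

/-- The quantum binomial coefficient `[n; k]_a`. -/
def qbinom (a : F) (n k : ℕ) : F := qfac a n / (qfac a k * qfac a (n - k))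

/-- A symmetrizable generalized Cartan matrix of finite type, together with a
symmetrizer. -/
structure CartanDatum (I : Type) [Fintype I] where
  c : I → I → ℤ
  d : I → ℤ
  c_diag : ∀ i, c i i = 2
  c_offdiag : ∀ i j, i ≠ j → c i j ≤ 0
  c_zero_iff : ∀ i j, c i j = 0 ↔ c j i = 0
  d_pos : ∀ i, 1 ≤ d i
  symm : ∀ i j, d i * c i j = d j * c j i
  posdef : ∀ x : I → ℚ, x ≠ 0 → 0 < ∑ i, ∑ j, (d i * c i j : ℚ) * x i * x j

variable {I : Type} [Fintype I] [DecidableEq I]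

/-- `q_i := q^{d_i} = v^{2 d_i}`. -/
def qi (D : CartanDatum I) (i : I) : F := v ^ (2 * D.d i)

/-- The symmetric bilinear form `(α_i, α_j) := d_i c_{i,j}`. -/
def ip (D : CartanDatum I) (i j : I) : ℤ := D.d i * D.c i j

/-- The defining relations of the boson-extended quantum unipotent coordinate
algebra `Â_q(n)`: quantum Serre relations, quantum boson relations, and
`q`-commutation for far-apart parameters. -/
inductive AhatRel (D : CartanDatum I) :
    FreeAlgebra F (I × ℤ) → FreeAlgebra F (I × ℤ) → Prop
  | serre : ∀ (i j : I), i ≠ j → ∀ m : ℤ,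
      AhatRel D
        (∑ s ∈ Finset.range ((1 - D.c i j).toNat + 1),
          (((-1 : F) ^ s * qbinom (qi D i) (1 - D.c i j).toNat s) •
            (FreeAlgebra.ι F (i, m) ^ ((1 - D.c i j).toNat - s) *
              FreeAlgebra.ι F (j, m) * FreeAlgebra.ι F (i, m) ^ s)))
        0
  | boson : ∀ (i j : I) (k : ℤ),
      AhatRel D
        (FreeAlgebra.ι F (i, k) * FreeAlgebra.ι F (j, k + 1))
        ((v ^ (-2 * ip D i j)) • (FreeAlgebra.ι F (j, k + 1) * FreeAlgebra.ι F (i, k)) +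
          (if i = j then ((1 : F) - v ^ (-2 * ip D i i)) else 0) • (1 : FreeAlgebra F (I × ℤ)))
  | far : ∀ (i j : I) (k l : ℤ), k + 1 < l →
      AhatRel D
        (FreeAlgebra.ι F (i, k) * FreeAlgebra.ι F (j, l))
        ((v ^ ((if Even (k + l) then 1 else -1) * 2 * ip D i j)) •
          (FreeAlgebra.ι F (j, l) * FreeAlgebra.ι F (i, k)))

/-- The boson-extended quantum unipotent coordinate algebra `Â_q(n)`, presented by
generators `y_{i,m}` and the relations `AhatRel D`. -/
abbrev Ahat (D : CartanDatum I) : Type := RingQuot (AhatRel D)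

/-- The generator `y_{i,m}` of `Â_q(n)`. -/
def Y (D : CartanDatum I) (i : I) (m : ℤ) : Ahat D :=
  RingQuot.mkAlgHom F (AhatRel D) (FreeAlgebra.ι F (i, m))

/-- The divided power `y_{i,m}^{(k)} = y_{i,m}^k / [k]_{q_i}!`. -/
def ydiv (D : CartanDatum I) (i : I) (m : ℤ) (k : ℕ) : Ahat D :=
  (qfac (qi D i) k)⁻¹ • (Y D i m) ^ k

/-- `T` is a braid operator at `i`: an `F`-algebra automorphism of `Â_q(n)` acting on
the generators by the prescribed formulas. -/
def IsBraidOp (D : CartanDatum I) (i : I) (T : Ahat D ≃ₐ[F] Ahat D) : Prop :=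
  ∀ (j : I) (m : ℤ),
    (0 ≤ D.c i j → T (Y D j m) = Y D j (m + if i = j then 1 else 0)) ∧
    (D.c i j < 0 →
      T (Y D j m) =
        ((qi D i - (qi D i)⁻¹) ^ (D.c i j)) •
          ∑ k ∈ Finset.range ((-D.c i j).toNat + 1),
            (((-1 : F) ^ k * v ^ (-(ip D i j) - 2 * D.d i * (k : ℤ))) •
              (ydiv D i m k * Y D j m * ydiv D i m ((-D.c i j).toNat - k))))

/-- The Coxeter exponent `h_{i,j} = 2, 3, 4, 6` according as
`c_{i,j} c_{j,i} = 0, 1, 2, 3`. -/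
def hnum (p : ℤ) : ℕ := if p = 0 then 2 else if p = 1 then 3 else if p = 2 then 4 else 6


/-! ### Auxiliary lemmas for `stmt5` -/

lemma v_pow_ne_one (n : ℕ) (hn : 0 < n) : (v : F) ^ n ≠ 1 := by
  intro h
  have hX : (Polynomial.X : Polynomial ℚ) ^ n = 1 := by
    apply RatFunc.algebraMap_injective ℚ
    simpa [v, RatFunc.algebraMap_X, map_pow] using h
  have := congrArg Polynomial.natDegree hX
  simp [Polynomial.natDegree_X_pow] at this
  omega

lemma qi_ne_inv (D : CartanDatum I) (i : I) : qi D i ≠ (qi D i)⁻¹ := by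
  intro h
  have hv : (v : F) ≠ 0 := by
    simpa [v] using (RatFunc.X_ne_zero : (RatFunc.X : RatFunc ℚ) ≠ 0)
  have hd := D.d_pos i
  have hq : qi D i ≠ 0 := by
    simp only [qi]
    exact zpow_ne_zero _ hv
  have h2 : qi D i * qi D i = 1 := by
    nth_rewrite 2 [h]
    exact mul_inv_cancel₀ hq
  have h3 : (v : F) ^ (2 * D.d i) * v ^ (2 * D.d i) = 1 := h2
  rw [← zpow_add₀ hv] at h3
  have h4 : (v : F) ^ ((2 * D.d i + 2 * D.d i).toNat) = 1 := by
    rw [← zpow_natCast, Int.toNat_of_nonneg (by omega)]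
    exact h3
  exact v_pow_ne_one _ (by omega) h4

lemma qnum_one (a : F) (h : a ≠ a⁻¹) : qnum a 1 = 1 := by
  rw [qnum, pow_one, pow_one, div_self (sub_ne_zero.mpr h)]

lemma qfac_zero (a : F) : qfac a 0 = 1 := by simp [qfac]

lemma qfac_one (a : F) (h : a ≠ a⁻¹) : qfac a 1 = 1 := by
  simp [qfac, qnum_one a h]

lemma qbinom_one (a : F) (h : a ≠ a⁻¹) (s : ℕ) : qbinom a 1 s = 1 ∨ s > 1 := by
  rcases s with _ | _ | s
  · left; simp [qbinom, qfac_zero, qfac_one a h]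
  · left; simp [qbinom, qfac_zero, qfac_one a h]
  · right; omega

/-- `y_{i,m}` and `y_{j,m}` commute when `c_{i,j} = 0`. -/
lemma Y_comm (D : CartanDatum I) (i j : I) (hij : i ≠ j) (hc : D.c i j = 0) (m : ℤ) :
    Y D i m * Y D j m = Y D j m * Y D i m := by
  have hrel := RingQuot.mkAlgHom_rel F (AhatRel.serre (D := D) i j hij m)
  have htn : (1 - D.c i j).toNat = 1 := by rw [hc]; rfl
  rw [htn] at hrel
  rw [map_sum] at hrel
  rw [Finset.sum_range_succ, Finset.sum_range_succ, Finset.sum_range_zero] at hrel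
  have hb0 : qbinom (qi D i) 1 0 = 1 := by
    simp [qbinom, qfac_zero, qfac_one _ (qi_ne_inv D i)]
  have hb1 : qbinom (qi D i) 1 1 = 1 := by
    simp [qbinom, qfac_zero, qfac_one _ (qi_ne_inv D i)]
  simp only [map_smul, map_mul, map_pow, map_neg, map_zero, zero_add, pow_zero, pow_one,
    hb0, hb1, one_mul, mul_one, one_smul, neg_mul, neg_smul, Nat.sub_self,
    Nat.sub_zero] at hrel
  have h0 : Y D i m * Y D j m - Y D j m * Y D i m = 0 := by
    rw [sub_eq_add_neg]; exact hrel
  exact sub_eq_zero.mp h0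

/-- The expression appearing in the negative branch of `IsBraidOp`. -/
def braidExpr (D : CartanDatum I) (i j : I) (m : ℤ) (x : Ahat D) : Ahat D :=
  ((qi D i - (qi D i)⁻¹) ^ (D.c i j)) •
    ∑ k ∈ Finset.range ((-D.c i j).toNat + 1),
      (((-1 : F) ^ k * v ^ (-(ip D i j) - 2 * D.d i * (k : ℤ))) •
        (ydiv D i m k * x * ydiv D i m ((-D.c i j).toNat - k)))

lemma isBraidOp_neg {D : CartanDatum I} {i : I} {T : Ahat D ≃ₐ[F] Ahat D}
    (hT : IsBraidOp D i T) {j : I} (m : ℤ) (h : D.c i j < 0) :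
    T (Y D j m) = braidExpr D i j m (Y D j m) := (hT j m).2 h

lemma map_ydiv {D : CartanDatum I} {i : I} {T : Ahat D ≃ₐ[F] Ahat D} {m : ℤ}
    (h : T (Y D i m) = Y D i m) (k : ℕ) : T (ydiv D i m k) = ydiv D i m k := by
  rw [ydiv, map_smul, map_pow, h]

lemma map_braidExpr {D : CartanDatum I} {i : I} {T : Ahat D ≃ₐ[F] Ahat D} {m : ℤ}
    (h : T (Y D i m) = Y D i m) (j : I) (x : Ahat D) :
    T (braidExpr D i j m x) = braidExpr D i j m (T x) := by
  rw [braidExpr, braidExpr, map_smul, map_sum]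
  congr 1
  refine Finset.sum_congr rfl fun k _ => ?_
  rw [map_smul, map_mul, map_mul, map_ydiv h, map_ydiv h]

lemma smul_congr {s t : F} {D : CartanDatum I} {x y : Ahat D} (h : s = t) (h2 : x = y) :
    s • x = t • y := by rw [h, h2]

lemma four_swap {D : CartanDatum I} (a b c d x : Ahat D)
    (h1 : a * b = b * a) (h2 : c * d = d * c) :
    a * (b * x * c) * d = b * (a * x * d) * c := by
  have e1 : a * (b * x * c) * d = a * b * x * (c * d) := by simp only [mul_assoc]
  have e2 : b * (a * x * d) * c = b * a * x * (d * c) := by simp only [mul_assoc]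
  rw [e1, e2, h1, h2]

lemma ydiv_comm {D : CartanDatum I} {i j : I} {m : ℤ}
    (h : Y D i m * Y D j m = Y D j m * Y D i m) (a b : ℕ) :
    ydiv D i m a * ydiv D j m b = ydiv D j m b * ydiv D i m a := by
  have hp : Y D i m ^ a * Y D j m ^ b = Y D j m ^ b * Y D i m ^ a :=
    (show Commute (Y D i m) (Y D j m) from h).pow_pow a b
  rw [ydiv, ydiv, smul_mul_assoc, mul_smul_comm, smul_mul_assoc, mul_smul_comm,
    smul_smul, smul_smul, mul_comm ((qfac (qi D j) b)⁻¹), hp]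

lemma braidExpr_swap {D : CartanDatum I} {i j : I} {m : ℤ}
    (h : Y D i m * Y D j m = Y D j m * Y D i m) (k : I) (x : Ahat D) :
    braidExpr D i k m (braidExpr D j k m x) = braidExpr D j k m (braidExpr D i k m x) := by
  simp only [braidExpr, Finset.smul_sum, Finset.mul_sum, Finset.sum_mul,
    smul_mul_assoc, mul_smul_comm, smul_smul]
  rw [Finset.sum_comm]
  refine Finset.sum_congr rfl fun a _ => Finset.sum_congr rfl fun b _ => ?_
  refine smul_congr (by ring) ?_
  exact four_swap _ _ _ _ _ (ydiv_comm h _ _) (ydiv_comm h _ _).symm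

/-- commuting braid operators when `c_{i,j} = 0`. -/
theorem stmt5 (I : Type) [Fintype I] [DecidableEq I] (D : CartanDatum I)
    (i j : I) (hij : i ≠ j) (hc : D.c i j = 0)
    (Ti Tj : Ahat D ≃ₐ[F] Ahat D)
    (hTi : IsBraidOp D i Ti) (hTj : IsBraidOp D j Tj) :
    ∀ x : Ahat D, Ti (Tj x) = Tj (Ti x) := by
  -- basic facts
  have hc' : D.c j i = 0 := (D.c_zero_iff i j).mp hc
  have hYc : ∀ m : ℤ, Y D i m * Y D j m = Y D j m * Y D i m :=
    fun m => Y_comm D i j hij hc m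
  -- action on generators
  have hgen : ∀ (k : I) (m : ℤ), Ti (Tj (Y D k m)) = Tj (Ti (Y D k m)) := by
    intro k m
    have hTjfix_i : ∀ n : ℤ, Tj (Y D i n) = Y D i n := by
      intro n
      have := (hTj i n).1 (le_of_eq hc'.symm)
      simpa [hij.symm] using this
    have hTifix_j : ∀ n : ℤ, Ti (Y D j n) = Y D j n := by
      intro n
      have := (hTi j n).1 (le_of_eq hc.symm)
      simpa [hij] using this
    by_cases hki : k = i
    · subst hki
      have h1 : Ti (Y D k m) = Y D k (m + 1) := by
        have := (hTi k m).1 (by rw [D.c_diag]; norm_num)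
        simpa using this
      rw [hTjfix_i m, h1, hTjfix_i (m + 1)]
    · by_cases hkj : k = j
      · subst hkj
        have h1 : Tj (Y D k m) = Y D k (m + 1) := by
          have := (hTj k m).1 (by rw [D.c_diag]; norm_num)
          simpa using this
        rw [hTifix_j m, h1, hTifix_j (m + 1)]
      · -- k distinct from i and j
        by_cases hik : D.c i k < 0
        · by_cases hjk : D.c j k < 0
          · -- hard case
            rw [isBraidOp_neg hTj m hjk, isBraidOp_neg hTi m hik,
              map_braidExpr (hTifix_j m), map_braidExpr (hTjfix_i m),
              isBraidOp_neg hTi m hik, isBraidOp_neg hTj m hjk]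
            exact (braidExpr_swap (hYc m) k (Y D k m)).symm
          · have hTjfix_k : Tj (Y D k m) = Y D k m := by
              have := (hTj k m).1 (le_of_not_gt hjk)
              simpa [Ne.symm hkj] using this
            rw [hTjfix_k, isBraidOp_neg hTi m hik, map_braidExpr (hTjfix_i m), hTjfix_k]
        · have hTifix_k : ∀ n : ℤ, Ti (Y D k n) = Y D k n := by
            intro n
            have := (hTi k n).1 (le_of_not_gt hik)
            simpa [Ne.symm hki] using this
          by_cases hjk : D.c j k < 0
          · rw [hTifix_k, isBraidOp_neg hTj m hjk, map_braidExpr (hTifix_j m), hTifix_k]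
          · have hTjfix_k : Tj (Y D k m) = Y D k m := by
              have := (hTj k m).1 (le_of_not_gt hjk)
              simpa [Ne.symm hkj] using this
            calc Ti (Tj (Y D k m)) = Y D k m := by rw [hTjfix_k, hTifix_k m]
              _ = Tj (Ti (Y D k m)) := by rw [hTifix_k m, hTjfix_k]
  -- extend to all of Ahat via generation
  intro x
  obtain ⟨a, rfl⟩ := RingQuot.mkAlgHom_surjective F (AhatRel D) x
  induction a using FreeAlgebra.induction with
  | grade0 r =>
      simp only [AlgHom.commutes, AlgEquiv.commutes]
  | grade1 p =>
      exact hgen p.1 p.2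
  | mul a b ha hb =>
      simp only [map_mul, ha, hb]
  | add a b ha hb =>
      simp only [map_add, ha, hb]
end
end

section
/- Let y₁, y₂, y₃ ∈ A satisfy y₁y₃ = y₃y₁, (q² + q^{−2}) y₂y₁y₂ = y₂²y₁ + y₁y₂², and (q² + q^{−2}) y₂y₃y₂ = y₂²y₃ + y₃y₂² (the quantum Serre relations at the node 2 of a diagram of type B₃). Then the following identity holds in A: (q³ + q)(y₁y₂y₃y₂y₃ − y₁y₃y₂y₃y₂) + (q − q^{−1})(y₃²y₂y₁y₂ − y₂y₁y₂y₃²) + (q^{−1} + q^{−3})(y₃y₂y₃y₂y₁ − y₂y₃y₂y₃y₁) + q·y₃²y₁y₂² + q^{−1}·y₂²y₁y₃² − q·y₁y₂²y₃² − q^{−1}·y₃²y₂²y₁ = 0. -/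
noncomputable section

/-- The variable `q` of the field `F = ℚ(q)`. -/
def q : RatFunc ℚ := RatFunc.X

set_option maxHeartbeats 1600000 in
private theorem stmt17_aux (A : Type) [Ring A] [Algebra (RatFunc ℚ) A]
    (y1 y2 y3 : A)
    (h13 : y1 * y3 = y3 * y1)
    (h21' : (q ^ 4 + 1) • (y2 * (y1 * y2))
      = q ^ 2 • (y2 * (y2 * y1)) + q ^ 2 • (y1 * (y2 * y2)))
    (h23' : (q ^ 4 + 1) • (y2 * (y3 * y2))
      = q ^ 2 • (y2 * (y2 * y3)) + q ^ 2 • (y3 * (y2 * y2)))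
    (s1 : (q ^ 4 + 1) * q ^ 3 * (q ^ 3 + q) = (q ^ 4 + 1) * (q ^ 6 + q ^ 4))
    (s2 : (q ^ 4 + 1) * q ^ 3 * (q - q ^ (-1 : ℤ)) = (q ^ 4 + 1) * (q ^ 4 - q ^ 2))
    (s3 : (q ^ 4 + 1) * q ^ 3 * (q ^ (-1 : ℤ) + q ^ (-3 : ℤ)) = (q ^ 4 + 1) * (q ^ 2 + 1))
    (s4 : (q ^ 4 + 1) * q ^ 3 * q = (q ^ 4 + 1) * q ^ 4)
    (s5 : (q ^ 4 + 1) * q ^ 3 * q ^ (-1 : ℤ) = (q ^ 4 + 1) * q ^ 2) :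
    ((q ^ 4 + 1) * q ^ 3) •
      ((q ^ 3 + q) • (y1 * y2 * y3 * y2 * y3 - y1 * y3 * y2 * y3 * y2)
      + (q - q ^ (-1 : ℤ)) • (y3 ^ 2 * y2 * y1 * y2 - y2 * y1 * y2 * y3 ^ 2)
      + (q ^ (-1 : ℤ) + q ^ (-3 : ℤ)) • (y3 * y2 * y3 * y2 * y1 - y2 * y3 * y2 * y3 * y1)
      + q • (y3 ^ 2 * y1 * y2 ^ 2) + q ^ (-1 : ℤ) • (y2 ^ 2 * y1 * y3 ^ 2)
      - q • (y1 * y2 ^ 2 * y3 ^ 2) - q ^ (-1 : ℤ) • (y3 ^ 2 * y2 ^ 2 * y1)) = 0 := by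
  have Z1 : (q ^ 4 + 1) • (y3 * (y3 * (y2 * (y1 * (y2))))) - (q ^ 2 • (y3 * (y3 * (y2 * (y2 * (y1))))) + q ^ 2 • (y3 * (y3 * (y1 * (y2 * (y2)))))) = 0 := by
    rw [sub_eq_zero]
    simpa only [mul_add, add_mul, mul_smul_comm, smul_mul_assoc, mul_assoc] using
      congrArg (fun x => y3 * (y3 * (x))) h21'
  have Z2 : (q ^ 4 + 1) • (y2 * (y1 * (y2 * (y3 * (y3))))) - (q ^ 2 • (y2 * (y2 * (y1 * (y3 * (y3))))) + q ^ 2 • (y1 * (y2 * (y2 * (y3 * (y3)))))) = 0 := by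
    rw [sub_eq_zero]
    simpa only [mul_add, add_mul, mul_smul_comm, smul_mul_assoc, mul_assoc] using
      congrArg (fun x => x * (y3 * (y3))) h21'
  have Z3 : (q ^ 4 + 1) • (y1 * (y2 * (y3 * (y2 * (y3))))) - (q ^ 2 • (y1 * (y2 * (y2 * (y3 * (y3))))) + q ^ 2 • (y1 * (y3 * (y2 * (y2 * (y3)))))) = 0 := by
    rw [sub_eq_zero]
    simpa only [mul_add, add_mul, mul_smul_comm, smul_mul_assoc, mul_assoc] using
      congrArg (fun x => y1 * (x * (y3))) h23'
  have Z4 : (q ^ 4 + 1) • (y3 * (y1 * (y2 * (y3 * (y2))))) - (q ^ 2 • (y3 * (y1 * (y2 * (y2 * (y3))))) + q ^ 2 • (y3 * (y1 * (y3 * (y2 * (y2)))))) = 0 := by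
    rw [sub_eq_zero]
    simpa only [mul_add, add_mul, mul_smul_comm, smul_mul_assoc, mul_assoc] using
      congrArg (fun x => y3 * (y1 * (x))) h23'
  have Z5 : (q ^ 4 + 1) • (y3 * (y2 * (y3 * (y2 * (y1))))) - (q ^ 2 • (y3 * (y2 * (y2 * (y3 * (y1))))) + q ^ 2 • (y3 * (y3 * (y2 * (y2 * (y1)))))) = 0 := by
    rw [sub_eq_zero]
    simpa only [mul_add, add_mul, mul_smul_comm, smul_mul_assoc, mul_assoc] using
      congrArg (fun x => y3 * (x * (y1))) h23'
  have Z6 : (q ^ 4 + 1) • (y2 * (y3 * (y2 * (y3 * (y1))))) - (q ^ 2 • (y2 * (y2 * (y3 * (y3 * (y1))))) + q ^ 2 • (y3 * (y2 * (y2 * (y3 * (y1)))))) = 0 := by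
    rw [sub_eq_zero]
    simpa only [mul_add, add_mul, mul_smul_comm, smul_mul_assoc, mul_assoc] using
      congrArg (fun x => x * (y3 * (y1))) h23'
  have Z7 : (y1 * (y3 * (y2 * (y2 * (y3))))) - (y3 * (y1 * (y2 * (y2 * (y3))))) = 0 := by
    rw [sub_eq_zero]
    simpa only [mul_add, add_mul, mul_smul_comm, smul_mul_assoc, mul_assoc] using
      congrArg (fun x => x * (y2 * (y2 * (y3)))) h13
  have Z8 : (y3 * (y1 * (y3 * (y2 * (y2))))) - (y3 * (y3 * (y1 * (y2 * (y2))))) = 0 := by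
    rw [sub_eq_zero]
    simpa only [mul_add, add_mul, mul_smul_comm, smul_mul_assoc, mul_assoc] using
      congrArg (fun x => y3 * (x * (y2 * (y2)))) h13
  have Z9 : (y1 * (y3 * (y2 * (y3 * (y2))))) - (y3 * (y1 * (y2 * (y3 * (y2))))) = 0 := by
    rw [sub_eq_zero]
    simpa only [mul_add, add_mul, mul_smul_comm, smul_mul_assoc, mul_assoc] using
      congrArg (fun x => x * (y2 * (y3 * (y2)))) h13
  have Z10 : (y2 * (y2 * (y1 * (y3 * (y3))))) - (y2 * (y2 * (y3 * (y1 * (y3))))) = 0 := by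
    rw [sub_eq_zero]
    simpa only [mul_add, add_mul, mul_smul_comm, smul_mul_assoc, mul_assoc] using
      congrArg (fun x => y2 * (y2 * (x * (y3)))) h13
  have Z11 : (y2 * (y2 * (y3 * (y1 * (y3))))) - (y2 * (y2 * (y3 * (y3 * (y1))))) = 0 := by
    rw [sub_eq_zero]
    simpa only [mul_add, add_mul, mul_smul_comm, smul_mul_assoc, mul_assoc] using
      congrArg (fun x => y2 * (y2 * (y3 * (x)))) h13
  have big : (q ^ 4 - q ^ 2) • ((q ^ 4 + 1) • (y3 * (y3 * (y2 * (y1 * (y2))))) - (q ^ 2 • (y3 * (y3 * (y2 * (y2 * (y1))))) + q ^ 2 • (y3 * (y3 * (y1 * (y2 * (y2)))))))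
        - (q ^ 4 - q ^ 2) • ((q ^ 4 + 1) • (y2 * (y1 * (y2 * (y3 * (y3))))) - (q ^ 2 • (y2 * (y2 * (y1 * (y3 * (y3))))) + q ^ 2 • (y1 * (y2 * (y2 * (y3 * (y3)))))))
        + (q ^ 6 + q ^ 4) • ((q ^ 4 + 1) • (y1 * (y2 * (y3 * (y2 * (y3))))) - (q ^ 2 • (y1 * (y2 * (y2 * (y3 * (y3))))) + q ^ 2 • (y1 * (y3 * (y2 * (y2 * (y3)))))))
        - (q ^ 6 + q ^ 4) • ((q ^ 4 + 1) • (y3 * (y1 * (y2 * (y3 * (y2))))) - (q ^ 2 • (y3 * (y1 * (y2 * (y2 * (y3))))) + q ^ 2 • (y3 * (y1 * (y3 * (y2 * (y2)))))))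
        + (q ^ 2 + 1) • ((q ^ 4 + 1) • (y3 * (y2 * (y3 * (y2 * (y1))))) - (q ^ 2 • (y3 * (y2 * (y2 * (y3 * (y1))))) + q ^ 2 • (y3 * (y3 * (y2 * (y2 * (y1)))))))
        - (q ^ 2 + 1) • ((q ^ 4 + 1) • (y2 * (y3 * (y2 * (y3 * (y1))))) - (q ^ 2 • (y2 * (y2 * (y3 * (y3 * (y1))))) + q ^ 2 • (y3 * (y2 * (y2 * (y3 * (y1)))))))
        + (q ^ 8 + q ^ 6) • ((y1 * (y3 * (y2 * (y2 * (y3))))) - (y3 * (y1 * (y2 * (y2 * (y3))))))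
        - (q ^ 8 + q ^ 6) • ((y3 * (y1 * (y3 * (y2 * (y2))))) - (y3 * (y3 * (y1 * (y2 * (y2))))))
        - ((q ^ 6 + q ^ 4) * (q ^ 4 + 1)) • ((y1 * (y3 * (y2 * (y3 * (y2))))) - (y3 * (y1 * (y2 * (y3 * (y2))))))
        + (q ^ 4 + q ^ 2) • ((y2 * (y2 * (y1 * (y3 * (y3))))) - (y2 * (y2 * (y3 * (y1 * (y3))))))
        + (q ^ 4 + q ^ 2) • ((y2 * (y2 * (y3 * (y1 * (y3))))) - (y2 * (y2 * (y3 * (y3 * (y1))))))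
      = 0 := by
    rw [Z1, Z2, Z3, Z4, Z5, Z6, Z7, Z8, Z9, Z10, Z11]
    simp only [smul_zero, add_zero, zero_add, sub_zero, neg_zero]
  calc ((q ^ 4 + 1) * q ^ 3) •
      ((q ^ 3 + q) • (y1 * y2 * y3 * y2 * y3 - y1 * y3 * y2 * y3 * y2)
      + (q - q ^ (-1 : ℤ)) • (y3 ^ 2 * y2 * y1 * y2 - y2 * y1 * y2 * y3 ^ 2)
      + (q ^ (-1 : ℤ) + q ^ (-3 : ℤ)) • (y3 * y2 * y3 * y2 * y1 - y2 * y3 * y2 * y3 * y1)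
      + q • (y3 ^ 2 * y1 * y2 ^ 2) + q ^ (-1 : ℤ) • (y2 ^ 2 * y1 * y3 ^ 2)
      - q • (y1 * y2 ^ 2 * y3 ^ 2) - q ^ (-1 : ℤ) • (y3 ^ 2 * y2 ^ 2 * y1))
      = (q ^ 4 - q ^ 2) • ((q ^ 4 + 1) • (y3 * (y3 * (y2 * (y1 * (y2))))) - (q ^ 2 • (y3 * (y3 * (y2 * (y2 * (y1))))) + q ^ 2 • (y3 * (y3 * (y1 * (y2 * (y2)))))))
        - (q ^ 4 - q ^ 2) • ((q ^ 4 + 1) • (y2 * (y1 * (y2 * (y3 * (y3))))) - (q ^ 2 • (y2 * (y2 * (y1 * (y3 * (y3))))) + q ^ 2 • (y1 * (y2 * (y2 * (y3 * (y3)))))))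
        + (q ^ 6 + q ^ 4) • ((q ^ 4 + 1) • (y1 * (y2 * (y3 * (y2 * (y3))))) - (q ^ 2 • (y1 * (y2 * (y2 * (y3 * (y3))))) + q ^ 2 • (y1 * (y3 * (y2 * (y2 * (y3)))))))
        - (q ^ 6 + q ^ 4) • ((q ^ 4 + 1) • (y3 * (y1 * (y2 * (y3 * (y2))))) - (q ^ 2 • (y3 * (y1 * (y2 * (y2 * (y3))))) + q ^ 2 • (y3 * (y1 * (y3 * (y2 * (y2)))))))
        + (q ^ 2 + 1) • ((q ^ 4 + 1) • (y3 * (y2 * (y3 * (y2 * (y1))))) - (q ^ 2 • (y3 * (y2 * (y2 * (y3 * (y1))))) + q ^ 2 • (y3 * (y3 * (y2 * (y2 * (y1)))))))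
        - (q ^ 2 + 1) • ((q ^ 4 + 1) • (y2 * (y3 * (y2 * (y3 * (y1))))) - (q ^ 2 • (y2 * (y2 * (y3 * (y3 * (y1))))) + q ^ 2 • (y3 * (y2 * (y2 * (y3 * (y1)))))))
        + (q ^ 8 + q ^ 6) • ((y1 * (y3 * (y2 * (y2 * (y3))))) - (y3 * (y1 * (y2 * (y2 * (y3))))))
        - (q ^ 8 + q ^ 6) • ((y3 * (y1 * (y3 * (y2 * (y2))))) - (y3 * (y3 * (y1 * (y2 * (y2))))))
        - ((q ^ 6 + q ^ 4) * (q ^ 4 + 1)) • ((y1 * (y3 * (y2 * (y3 * (y2))))) - (y3 * (y1 * (y2 * (y3 * (y2))))))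
        + (q ^ 4 + q ^ 2) • ((y2 * (y2 * (y1 * (y3 * (y3))))) - (y2 * (y2 * (y3 * (y1 * (y3))))))
        + (q ^ 4 + q ^ 2) • ((y2 * (y2 * (y3 * (y1 * (y3))))) - (y2 * (y2 * (y3 * (y3 * (y1)))))) := by
        simp only [smul_add, smul_sub, smul_smul]
        rw [s1, s2, s3, s4, s5]
        simp only [pow_two, mul_add, add_mul, mul_sub, sub_mul, mul_smul_comm,
          smul_mul_assoc, smul_smul, smul_add, smul_sub, mul_assoc]
        ring_nf
        simp only [add_smul, sub_smul, neg_smul, one_smul]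
        abel
    _ = 0 := big

theorem stmt17 (A : Type) [Ring A] [Algebra (RatFunc ℚ) A]
    (y1 y2 y3 : A)
    (h13 : y1 * y3 = y3 * y1)
    (h21 : (q ^ 2 + q ^ (-2 : ℤ)) • (y2 * y1 * y2) = y2 ^ 2 * y1 + y1 * y2 ^ 2)
    (h23 : (q ^ 2 + q ^ (-2 : ℤ)) • (y2 * y3 * y2) = y2 ^ 2 * y3 + y3 * y2 ^ 2) :
    (q ^ 3 + q) • (y1 * y2 * y3 * y2 * y3 - y1 * y3 * y2 * y3 * y2)
      + (q - q ^ (-1 : ℤ)) • (y3 ^ 2 * y2 * y1 * y2 - y2 * y1 * y2 * y3 ^ 2)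
      + (q ^ (-1 : ℤ) + q ^ (-3 : ℤ)) • (y3 * y2 * y3 * y2 * y1 - y2 * y3 * y2 * y3 * y1)
      + q • (y3 ^ 2 * y1 * y2 ^ 2) + q ^ (-1 : ℤ) • (y2 ^ 2 * y1 * y3 ^ 2)
      - q • (y1 * y2 ^ 2 * y3 ^ 2) - q ^ (-1 : ℤ) • (y3 ^ 2 * y2 ^ 2 * y1) = 0 := by
  have hq : q ≠ 0 := RatFunc.X_ne_zero
  have hqq : q * q⁻¹ = 1 := mul_inv_cancel₀ hq
  have e1 : q ^ (-1 : ℤ) = q⁻¹ := by rw [zpow_neg, zpow_one]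
  have e2 : q ^ (-2 : ℤ) = q⁻¹ ^ 2 := by
    rw [zpow_neg, inv_pow]
    norm_cast
  have e3 : q ^ (-3 : ℤ) = q⁻¹ ^ 3 := by
    rw [zpow_neg, inv_pow]
    norm_cast
  have h21' : (q ^ 4 + 1) • (y2 * (y1 * y2))
      = q ^ 2 • (y2 * (y2 * y1)) + q ^ 2 • (y1 * (y2 * y2)) := by
    have h := congrArg (fun z => q ^ 2 • z) h21
    simp only [smul_smul, smul_add] at h
    rw [show q ^ 2 * (q ^ 2 + q ^ (-2 : ℤ)) = q ^ 4 + 1 by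
      rw [e2]; linear_combination (q * q⁻¹ + 1) * hqq] at h
    simpa only [pow_two, mul_assoc] using h
  have h23' : (q ^ 4 + 1) • (y2 * (y3 * y2))
      = q ^ 2 • (y2 * (y2 * y3)) + q ^ 2 • (y3 * (y2 * y2)) := by
    have h := congrArg (fun z => q ^ 2 • z) h23
    simp only [smul_smul, smul_add] at h
    rw [show q ^ 2 * (q ^ 2 + q ^ (-2 : ℤ)) = q ^ 4 + 1 by
      rw [e2]; linear_combination (q * q⁻¹ + 1) * hqq] at h
    simpa only [pow_two, mul_assoc] using h
  have hne : (q ^ 4 + 1) * q ^ 3 ≠ 0 := by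
    apply mul_ne_zero
    · have hpoly : (Polynomial.X ^ 4 + 1 : Polynomial ℚ) ≠ 0 := by
        intro h
        simpa using congrArg (Polynomial.eval 0) h
      have hQ : (q ^ 4 + 1 : RatFunc ℚ)
          = algebraMap (Polynomial ℚ) (RatFunc ℚ) (Polynomial.X ^ 4 + 1) := by
        simp [q, map_add, map_pow, RatFunc.algebraMap_X]
      rw [hQ]
      exact RatFunc.algebraMap_ne_zero hpoly
    · exact pow_ne_zero _ hq
  have s1 : (q ^ 4 + 1) * q ^ 3 * (q ^ 3 + q) = (q ^ 4 + 1) * (q ^ 6 + q ^ 4) := by ring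
  have s2 : (q ^ 4 + 1) * q ^ 3 * (q - q ^ (-1 : ℤ)) = (q ^ 4 + 1) * (q ^ 4 - q ^ 2) := by
    rw [e1]; linear_combination (-((q ^ 4 + 1) * q ^ 2)) * hqq
  have s3 : (q ^ 4 + 1) * q ^ 3 * (q ^ (-1 : ℤ) + q ^ (-3 : ℤ))
      = (q ^ 4 + 1) * (q ^ 2 + 1) := by
    rw [e1, e3]
    linear_combination ((q ^ 4 + 1) * (q ^ 2 * q⁻¹ ^ 2 + q * q⁻¹ + 1 + q ^ 2)) * hqq
  have s4 : (q ^ 4 + 1) * q ^ 3 * q = (q ^ 4 + 1) * q ^ 4 := by ring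
  have s5 : (q ^ 4 + 1) * q ^ 3 * q ^ (-1 : ℤ) = (q ^ 4 + 1) * q ^ 2 := by
    rw [e1]; linear_combination ((q ^ 4 + 1) * q ^ 2) * hqq
  have main := stmt17_aux A y1 y2 y3 h13 h21' h23' s1 s2 s3 s4 s5
  have h0 := congrArg (fun z => ((q ^ 4 + 1) * q ^ 3)⁻¹ • z) main
  simp only [smul_smul, inv_mul_cancel₀ hne, one_smul, smul_zero] at h0
  exact h0
end
end

section
/- Let y₁, y₂, y₃ ∈ A satisfy y₁y₃ = y₃y₁, (q + q^{−1}) y₁y₂y₁ = y₁²y₂ + y₂y₁², (q + q^{−1}) y₂y₁y₂ = y₂²y₁ + y₁y₂², and y₁y₂²y₁ = y₂y₁²y₂. Then the following identity holds in A: (q + q^{−1})·[ q²·y₃y₂y₁y₂y₁ − q·y₃y₁y₂²y₁ − q·y₃y₂y₁²y₂ + y₃y₁y₂y₁y₂ − (q + q^{−1})·( q·y₂y₃y₁y₂y₁ − y₁y₂y₃y₂y₁ − y₂y₁²y₃y₂ + q^{−1}·y₁y₂y₁y₃y₂ ) + y₂y₁y₂y₁y₃ − q^{−1}·y₁y₂²y₁y₃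 − q^{−1}·y₂y₁²y₂y₃ + q^{−2}·y₁y₂y₁y₂y₃ ] = q²·y₃y₂²y₁² − (q² + 1)·y₂y₃y₂y₁² + y₂²y₃y₁² − (q² + 1)·y₁y₃y₂²y₁ + (q² + 2 + q^{−2})·y₁y₂y₃y₂y₁ − (1 + q^{−2})·y₁y₂²y₃y₁ + y₁²y₃y₂² − (1 + q^{−2})·y₁²y₂y₃y₂ + q^{−2}·y₁²y₂²y₃. -/
noncomputable section

theorem aux {A : Type} [Ring A] (a c y1 y2 y3 : A)
    (ha1 : a*y1 = y1*a) (ha2 : a*y2 = y2*a) (ha3 : a*y3 = y3*a)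
    (hc1 : c*y1 = y1*c) (hc2 : c*y2 = y2*c) (hc3 : c*y3 = y3*c)
    (hac : a*c = 1) (hca : c*a = 1)
    (h13 : y1*y3 = y3*y1)
    (h12 : (a+c)*(y1*y2*y1) = y1^2*y2 + y2*y1^2)
    (h21 : (a+c)*(y2*y1*y2) = y2^2*y1 + y1*y2^2)
    (h1221 : y1*y2^2*y1 = y2*y1^2*y2) :
    (a+c) * (a^2*(y3*y2*y1*y2*y1) - a*(y3*y1*y2^2*y1) - a*(y3*y2*y1^2*y2) + y3*y1*y2*y1*y2
      - (a+c)*(a*(y2*y3*y1*y2*y1) - y1*y2*y3*y2*y1 - y2*y1^2*y3*y2 + c*(y1*y2*y1*y3*y2))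
      + y2*y1*y2*y1*y3 - c*(y1*y2^2*y1*y3) - c*(y2*y1^2*y2*y3) + c^2*(y1*y2*y1*y2*y3))
    = a^2*(y3*y2^2*y1^2) - (a^2+1)*(y2*y3*y2*y1^2) + y2^2*y3*y1^2 - (a^2+1)*(y1*y3*y2^2*y1)
      + (a^2+2+c^2)*(y1*y2*y3*y2*y1) - (1+c^2)*(y1*y2^2*y3*y1) + y1^2*y3*y2^2
      - (1+c^2)*(y1^2*y2*y3*y2) + c^2*(y1^2*y2^2*y3) := by
  linear_combination (norm := noncomm_ring)
      ((1)*a*a)*y3*h21*y1 +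
      ((1))*y3*y1*h21 +
      ((1))*h21*y1*y3 +
      ((1)*c*c)*y1*h21*y3 +
      ((-1))*y1*h13*y2*y2 +
      ((-1))*h13*y1*y2*y2 +
      ((1))*y2*y2*h13*y1 +
      ((1))*y2*y2*y1*h13 +
      ((-1)*a*a + (-1)*c*a)*y2*y3*h12 +
      ((1)*a*a + (1)*c*a)*y2*y1*h13*y2 +
      ((1)*a*a + (1)*c*a)*y2*h13*y1*y2 +
      ((-1)*a*c + (-1)*c*c)*h12*y3*y2 +
      ((1)*a*a + (1)*c*a)*h13*y2*y2*y1 +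
      ((1)*a*a + (1)*c*a)*y3*h1221 +
      ((1)*a*c + (1)*c*c)*h1221*y3 +
      ((-1)*a*c + (-1)*c*c)*y1*y2*y2*h13 +
      (-1)*a*hac*y1*y2*y1*y3*y2 +
      (-1)*hac*a*y2*y3*y1*y2*y1 +
      (1)*hac*y1*y2*y3*y2*y1 +
      (-1)*hac*y1*y2*y2*y1*y3 +
      (1)*hac*c*y1*y2*y1*y2*y3 +
      (1)*hca*a*y3*y2*y1*y2*y1 +
      (-1)*hca*y3*y1*y2*y2*y1 +
      (-1)*hca*a*y2*y3*y1*y2*y1 +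
      (1)*hca*y1*y2*y3*y2*y1 +
      (-1)*hca*c*y1*y2*y1*y3*y2 +
      (-1)*c*hca*y2*y3*y1*y2*y1 +
      (1)*a*a*ha3*y2*y1*y2*y1 +
      (1)*a*a*hc3*y2*y1*y2*y1 +
      (1)*y3*ha1*y2*y1*y2 +
      (1)*y3*hc1*y2*y1*y2 +
      (1)*c*c*ha1*y2*y1*y2*y3 +
      (1)*c*c*hc1*y2*y1*y2*y3 +
      (-1)*a*a*y2*ha3*y1*y2*y1 +
      (-1)*a*a*y2*hc3*y1*y2*y1 +
      (1)*hca*y2*y3*a*y1*y2*y1 +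
      (1)*hca*y2*y3*c*y1*y2*y1 +
      (-1)*hca*y2*y3*y2*y1*y1 +
      (1)*hac*a*y1*y2*y1*y3*y2 +
      (-1)*hac*y1*y1*y2*y3*y2 +
      (1)*c*hca*y1*y2*y1*y3*y2 +
      (-1)*hca*y1*y3*y2*y2*y1 +
      (-1)*hac*y1*y2*y2*y3*y1 +
      (-1)*a*hac*y3*y2*y1*y2*y1 +
      (1)*ha3*y1*y2*y1*y2 +
      (1)*hc3*y1*y2*y1*y2 +
      (-1)*c*hca*y1*y2*y1*y2*y3 +
      (-1)*a*a*ha2*y3*y1*y2*y1 +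
      (-1)*a*a*hc2*y3*y1*y2*y1 +
      (-1)*y2*ha3*y1*y2*y1 +
      (-1)*y2*hc3*y1*y2*y1 +
      (1)*a*hac*y2*y3*y1*y2*y1 +
      (-1)*ha2*y3*y1*y2*y1 +
      (-1)*hc2*y3*y1*y2*y1

theorem stmt18 (A : Type) [Ring A] [Algebra (RatFunc ℚ) A]
    (y1 y2 y3 : A)
    (h13 : y1 * y3 = y3 * y1)
    (h12 : (q + q ^ (-1 : ℤ)) • (y1 * y2 * y1) = y1 ^ 2 * y2 + y2 * y1 ^ 2)
    (h21 : (q + q ^ (-1 : ℤ)) • (y2 * y1 * y2) = y2 ^ 2 * y1 + y1 * y2 ^ 2)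
    (h1221 : y1 * y2 ^ 2 * y1 = y2 * y1 ^ 2 * y2) :
    (q + q ^ (-1 : ℤ)) •
      ((q ^ 2) • (y3 * y2 * y1 * y2 * y1) - q • (y3 * y1 * y2 ^ 2 * y1)
        - q • (y3 * y2 * y1 ^ 2 * y2) + y3 * y1 * y2 * y1 * y2
        - (q + q ^ (-1 : ℤ)) •
            (q • (y2 * y3 * y1 * y2 * y1) - y1 * y2 * y3 * y2 * y1
              - y2 * y1 ^ 2 * y3 * y2 + q ^ (-1 : ℤ) • (y1 * y2 * y1 * y3 * y2))
        + y2 * y1 * y2 * y1 * y3 - q ^ (-1 : ℤ) • (y1 * y2 ^ 2 * y1 * y3)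
        - q ^ (-1 : ℤ) • (y2 * y1 ^ 2 * y2 * y3) + q ^ (-2 : ℤ) • (y1 * y2 * y1 * y2 * y3))
    = (q ^ 2) • (y3 * y2 ^ 2 * y1 ^ 2) - (q ^ 2 + 1) • (y2 * y3 * y2 * y1 ^ 2)
        + y2 ^ 2 * y3 * y1 ^ 2 - (q ^ 2 + 1) • (y1 * y3 * y2 ^ 2 * y1)
        + (q ^ 2 + 2 + q ^ (-2 : ℤ)) • (y1 * y2 * y3 * y2 * y1)
        - (1 + q ^ (-2 : ℤ)) • (y1 * y2 ^ 2 * y3 * y1)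
        + y1 ^ 2 * y3 * y2 ^ 2 - (1 + q ^ (-2 : ℤ)) • (y1 ^ 2 * y2 * y3 * y2)
        + q ^ (-2 : ℤ) • (y1 ^ 2 * y2 ^ 2 * y3) := by
  
  have hq : q ≠ 0 := by unfold q; exact RatFunc.X_ne_zero
  have h2 : q ^ (-2 : ℤ) = (q ^ (-1 : ℤ)) ^ 2 := by
    rw [← zpow_natCast (q ^ (-1 : ℤ)) 2, ← zpow_mul]; norm_num
  have hac : algebraMap (RatFunc ℚ) A q * algebraMap (RatFunc ℚ) A (q ^ (-1 : ℤ)) = 1 := by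
    rw [← map_mul, zpow_neg_one, mul_inv_cancel₀ hq, map_one]
  have hca : algebraMap (RatFunc ℚ) A (q ^ (-1 : ℤ)) * algebraMap (RatFunc ℚ) A q = 1 := by
    rw [← map_mul, zpow_neg_one, inv_mul_cancel₀ hq, map_one]
  have h12' : (algebraMap (RatFunc ℚ) A q + algebraMap (RatFunc ℚ) A (q ^ (-1 : ℤ))) * (y1*y2*y1)
      = y1 ^ 2 * y2 + y2 * y1 ^ 2 := by rw [← map_add, ← Algebra.smul_def, h12]
  have h21' : (algebraMap (RatFunc ℚ) A q + algebraMap (RatFunc ℚ) A (q ^ (-1 : ℤ))) * (y2*y1*y2)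
      = y2 ^ 2 * y1 + y1 * y2 ^ 2 := by rw [← map_add, ← Algebra.smul_def, h21]
  have key := aux (algebraMap (RatFunc ℚ) A q) (algebraMap (RatFunc ℚ) A (q ^ (-1 : ℤ))) y1 y2 y3
    (Algebra.commutes _ _) (Algebra.commutes _ _) (Algebra.commutes _ _)
    (Algebra.commutes _ _) (Algebra.commutes _ _) (Algebra.commutes _ _)
    hac hca h13 h12' h21' h1221
  rw [h2]
  simp only [Algebra.smul_def, map_add, map_pow, map_one, map_ofNat]
  linear_combination (norm := noncomm_ring) key
end
end
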